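/- arXiv:1704.03509 — 5 statements merged into one kernel-verified Lean document; each statement's English description precedes it below -/
import Mathlib

section
/- For multiplicative characters A, B of the finite field F_q, the binomial coefficient satisfies (A choose B) = (B̄ choose Ā)·A(-1)·B(-1). -/
open scoped BigOperators Classical

noncomputable section

variable {F : Type*} [Field F] [Fintype F]

instance : Fintype (MulChar F ℂ) := Fintype.ofFinite _

/-- Jacobi-type sum `J(χ,λ) = Σ_u χ(u) λ(1-u)`. -/
def Jsum (A B : MulChar F ℂ) : ℂ := ∑ u : F, A u * B (1 - u)

/-- Finite field binomial coefficient `(A choose B) = B(-1) J(A, B⁻¹)`. -/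
def binom (A B : MulChar F ℂ) : ℂ := B (-1) * Jsum A B⁻¹

/-- Finite field Gauss hypergeometric `₂F₁(A,B;C|x)` (normalized as in the paper). -/
def H2F1 (A B C : MulChar F ℂ) (x : F) : ℂ :=
  (1 : MulChar F ℂ) x * (B * C) (-1) *
    ∑ y : F, B y * (B⁻¹ * C) (1 - y) * A⁻¹ (1 - x * y)

/-- Finite field `₃F₂`. -/
def H3F2 (A0 A1 A2 B1 B2 : MulChar F ℂ) (x : F) : ℂ :=
  (1 / ((Fintype.card F : ℂ) - 1)) *
    ∑ χ : MulChar F ℂ, binom (A0 * χ) χ * binom (A1 * χ) (B1 * χ) *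
      binom (A2 * χ) (B2 * χ) * χ x

/-- Finite field Appell series `F₃`. -/
def AF3 (A A' B B' C : MulChar F ℂ) (x y : F) : ℂ :=
  (1 : MulChar F ℂ) (x * y) * B (-1) * B' (-1) *
    ∑ u : F, ∑ v : F, B u * B' v * (C * B⁻¹ * B'⁻¹) (1 - u - v) *
      A⁻¹ (1 - u * x) * A'⁻¹ (1 - v * y)

theorem binom_inv_inv (A B : MulChar F ℂ) :
    binom A B = binom B⁻¹ A⁻¹ * A (-1) * B (-1) := by
  have hA : A (-1) * A (-1) = 1 := by
    rw [← map_mul]; norm_num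
  have hinv : A⁻¹ (-1) = A (-1) := by
    rw [MulChar.inv_apply' A (-1 : F)]; norm_num
  have hJ : Jsum A B⁻¹ = Jsum B⁻¹ A := by
    unfold Jsum
    rw [← Equiv.sum_comp (Equiv.subLeft (1 : F))]
    apply Finset.sum_congr rfl
    intro u _
    simp [Equiv.subLeft, mul_comm]
  unfold binom
  rw [hinv, hJ, inv_inv]
  ring_nf
  rw [sq, hA, mul_one]
end
end

section
/- Binomial theorem over finite fields: for any multiplicative character A of F_q and any x ∈ F_q, A(1+x) = δ(x) + (1/(q-1))·Σ_χ (A choose χ)·χ(x), where the sum ranges over all multiplicative characters χ of F_q, and δ(x) = 1 if x = 0 and 0 otherwise. -/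
open scoped BigOperators Classical

noncomputable section

variable {F : Type*} [Field F] [Fintype F]

lemma sum_chars_eq (a : F) :
    ∑ χ : MulChar F ℂ, χ a = if a = 1 then ((Fintype.card F : ℂ) - 1) else 0 := by
  split_ifs with h
  · subst h
    simp only [map_one, Finset.sum_const, Finset.card_univ, nsmul_eq_mul, mul_one]
    have h1 : Fintype.card (MulChar F ℂ) = Fintype.card F - 1 := by
      rw [← Nat.card_eq_fintype_card, MulChar.card_eq_card_units_of_hasEnoughRootsOfUnity,
        Nat.card_eq_fintype_card, Fintype.card_units]
    rw [h1, Nat.cast_sub Fintype.card_pos, Nat.cast_one]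
  · obtain ⟨χ, hχ⟩ := MulChar.exists_apply_ne_one_of_hasEnoughRootsOfUnity F ℂ h
    refine eq_zero_of_mul_eq_self_left hχ ?_
    simp only [Finset.mul_sum, ← MulChar.mul_apply]
    exact Fintype.sum_bijective _ (Group.mulLeft_bijective χ) _ _ fun χ' ↦ rfl

theorem binomial_theorem (A : MulChar F ℂ) (x : F) :
    A (1 + x) = (if x = 0 then 1 else 0) +
      (1 / ((Fintype.card F : ℂ) - 1)) * ∑ χ : MulChar F ℂ, binom A χ * χ x := by
  have hc : ((Fintype.card F : ℂ) - 1) ≠ 0 := by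
    have h2 : 1 < Fintype.card F := Fintype.one_lt_card
    intro h; rw [sub_eq_zero] at h
    exact absurd (Nat.cast_injective (h.trans Nat.cast_one.symm)) h2.ne'

  have key : ∑ χ : MulChar F ℂ, binom A χ * χ x
      = ∑ u : F, A u * (if -x * (1 - u)⁻¹ = 1 then ((Fintype.card F : ℂ) - 1) else 0) := by
    simp only [binom, Jsum, Finset.sum_mul, Finset.mul_sum]
    rw [Finset.sum_comm]
    refine Finset.sum_congr rfl fun u _ ↦ ?_
    rw [← sum_chars_eq]
    rw [Finset.mul_sum]
    refine Finset.sum_congr rfl fun χ _ ↦ ?_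
    rw [MulChar.inv_apply']
    have : -x * (1 - u)⁻¹ = (-1) * (1 - u)⁻¹ * x := by ring
    rw [this, map_mul, map_mul]
    ring
  rw [key]
  by_cases hx : x = 0
  · subst hx
    have : ∀ u : F, (if -(0 : F) * (1 - u)⁻¹ = 1 then ((Fintype.card F : ℂ) - 1) else 0) = 0 := by
      intro u; rw [if_neg]; simp
    simp only [this, mul_zero, Finset.sum_const_zero, mul_zero, add_zero, if_pos rfl, add_zero]
    simp
  · have hcond : ∀ u : F, (-x * (1 - u)⁻¹ = 1) ↔ u = 1 + x := by
      intro u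
      constructor
      · intro h
        by_cases hu : u = 1
        · subst hu; simp at h
        · have h1u : (1 : F) - u ≠ 0 := sub_ne_zero.mpr fun h' ↦ hu h'.symm
          field_simp at h
          linear_combination h
      · intro h; subst h
        have : (1 : F) - (1 + x) = -x := by ring
        rw [this, inv_neg, mul_comm]
        field_simp
    have : ∑ u : F, A u * (if -x * (1 - u)⁻¹ = 1 then ((Fintype.card F : ℂ) - 1) else 0)
        = A (1 + x) * ((Fintype.card F : ℂ) - 1) := by
      rw [Finset.sum_eq_single (1 + x)]
      · rw [if_pos ((hcond (1 + x)).mpr rfl)]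
      · intro u _ hu
        rw [if_neg (fun h ↦ hu ((hcond u).mp h)), mul_zero]
      · intro h; exact absurd (Finset.mem_univ _) h
    rw [this, if_neg hx]
    field_simp
    ring
end
end

section
/- Greene's evaluation at 1: for multiplicative characters A, B, C of F_q, the finite field hypergeometric function satisfies 2F1(A, B; C | 1) = A(-1)·(B choose Ā·C). -/
open scoped BigOperators Classical

noncomputable section

variable {F : Type*} [Field F] [Fintype F]

/-- Key Jacobi-sum transformation, via the involution `u ↦ u/(u-1)`. -/
lemma Jsum_key (B L : MulChar F ℂ) : Jsum B L = B (-1) * Jsum B (B⁻¹ * L⁻¹) := by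
  have hz : ∀ (M : MulChar F ℂ), M 0 = 0 := fun M => M.map_nonunit not_isUnit_zero
  have hmem : ∀ u : F, u ∈ (Finset.univ : Finset F).erase 1 →
      u / (u - 1) ∈ (Finset.univ : Finset F).erase 1 := by
    intro u hu
    simp only [Finset.mem_erase, Finset.mem_univ, and_true] at hu ⊢
    have h1 : u - 1 ≠ 0 := sub_ne_zero.mpr hu
    intro h
    rw [div_eq_one_iff_eq h1] at h
    exact one_ne_zero (show (1:F) = 0 by linear_combination h)
  have hinv : ∀ u : F, u ∈ (Finset.univ : Finset F).erase 1 →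
      (u / (u - 1)) / (u / (u - 1) - 1) = u := by
    intro u hu
    simp only [Finset.mem_erase, Finset.mem_univ, and_true] at hu
    have h1 : u - 1 ≠ 0 := sub_ne_zero.mpr hu
    have h2 : u / (u - 1) - 1 = 1 / (u - 1) := by field_simp; ring
    rw [h2]
    field_simp
  unfold Jsum
  rw [Finset.mul_sum]
  rw [← Finset.sum_erase (Finset.univ : Finset F) (a := 1) (by simp [hz])]
  rw [← Finset.sum_erase (Finset.univ : Finset F) (a := 1) (by simp [hz])]
  refine Finset.sum_nbij' (fun u => u / (u - 1)) (fun u => u / (u - 1))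
    hmem hmem hinv hinv ?_
  intro u hu
  simp only [Finset.mem_erase, Finset.mem_univ, and_true] at hu
  have h1 : u - 1 ≠ 0 := sub_ne_zero.mpr hu
  have e2 : u / (u - 1) = u * (u - 1)⁻¹ := div_eq_mul_inv _ _
  have e1 : (1 : F) - u * (u - 1)⁻¹ = -(u - 1)⁻¹ := by field_simp; ring
  have e3 : (-(u - 1)⁻¹)⁻¹ = -1 * (u - 1) := by rw [inv_neg, inv_inv]; ring
  have e4 : (1 : F) - u = -1 * (u - 1) := by ring
  simp only [MulChar.coeToFun_mul, Pi.mul_apply, MulChar.inv_apply', e2, e1, e3, e4, map_mul]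
  have h2 : B (u - 1)⁻¹ * B (u - 1) = 1 := by
    rw [← map_mul, inv_mul_cancel₀ h1, map_one]
  have h3 : B (-1) * B (-1) = 1 := by
    rw [← map_mul, neg_mul_neg, one_mul, map_one]
  linear_combination (-(L (-1) * L (u - 1) * B u * (B (u-1)⁻¹ * B (u-1)))) * h3 -
    (L (-1) * L (u - 1) * B u) * h2

theorem H2F1_at_one (A B C : MulChar F ℂ) :
    H2F1 A B C (1 : F) = A (-1) * binom B (A⁻¹ * C) := by
  unfold H2F1 binom
  have hsum : (∑ y : F, B y * (B⁻¹ * C) (1 - y) * A⁻¹ (1 - (1:F) * y))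
      = Jsum B (A⁻¹ * (B⁻¹ * C)) := by
    unfold Jsum
    refine Finset.sum_congr rfl fun y _ => ?_
    simp only [one_mul, MulChar.coeToFun_mul, Pi.mul_apply]
    ring
  rw [hsum, Jsum_key]
  have hL : B⁻¹ * (A⁻¹ * (B⁻¹ * C))⁻¹ = (A⁻¹ * C)⁻¹ := by
    simp [mul_inv, inv_inv, mul_comm, mul_left_comm, mul_assoc]
  rw [hL, map_one]
  have hB : B (-1) * B (-1) = 1 := by rw [← map_mul, neg_mul_neg, one_mul, map_one]
  have hA : A (-1) * A (-1) = 1 := by rw [← map_mul, neg_mul_neg, one_mul, map_one]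
  simp only [MulChar.coeToFun_mul, Pi.mul_apply, MulChar.inv_apply', inv_neg, inv_one]
  linear_combination (C (-1) * Jsum B (A⁻¹ * C)⁻¹) * hB -
    (C (-1) * Jsum B (A⁻¹ * C)⁻¹) * hA
end
end

section
/- Reduction of F3 at x = 1: for multiplicative characters A, A', B, B', C of F_q and y ∈ F_q, F3(A, A'; B, B'; C; 1, y) = B(-1)·C(-1)·3F2(A', B', Ā·B̄·C; C·B̄, C·Ā | y). -/
open scoped BigOperators Classical

set_option linter.unusedSectionVars false
set_option maxHeartbeats 1000000

noncomputable section

variable {F : Type*} [Field F] [Fintype F]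

lemma card_mulChar : Fintype.card (MulChar F ℂ) = Fintype.card F - 1 := by
  have h := MulChar.card_eq_card_units_of_hasEnoughRootsOfUnity F ℂ
  rw [Nat.card_eq_fintype_card, Nat.card_eq_fintype_card] at h
  rw [h, Fintype.card_units]

lemma sum_mulChar (z : F) :
    ∑ χ : MulChar F ℂ, χ z = if z = 1 then ((Fintype.card F : ℂ) - 1) else 0 := by
  rcases eq_or_ne z 1 with rfl | hz
  · simp only [if_pos rfl, MulChar.map_one, Finset.sum_const, Finset.card_univ, nsmul_eq_mul,
      mul_one, card_mulChar]
    rw [Nat.cast_sub Fintype.card_pos, Nat.cast_one, if_pos trivial]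
  · simp only [if_neg hz]
    obtain ⟨ψ, hψ⟩ := MulChar.exists_apply_ne_one_of_hasEnoughRootsOfUnity (M := F) (R := ℂ) hz
    have key : ψ z * ∑ χ : MulChar F ℂ, χ z = ∑ χ : MulChar F ℂ, χ z := by
      rw [Finset.mul_sum]
      exact Fintype.sum_equiv (Equiv.mulLeft ψ) _ _ (fun χ => rfl)
    have h2 : (ψ z - 1) * ∑ χ : MulChar F ℂ, χ z = 0 := by
      rw [sub_mul, one_mul, key, sub_self]
    exact (mul_eq_zero.mp h2).resolve_left (sub_ne_zero.mpr hψ)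

lemma mc_inv (χ : MulChar F ℂ) (a : F) : χ a⁻¹ = (χ a)⁻¹ := by
  rcases eq_or_ne a 0 with rfl | h
  · simp [MulChar.map_zero]
  · exact eq_inv_of_mul_eq_one_left (by rw [← map_mul, inv_mul_cancel₀ h, map_one])

lemma mc_ne_zero (χ : MulChar F ℂ) {a : F} (ha : a ≠ 0) : χ a ≠ 0 := by
  intro h
  have : χ a * χ a⁻¹ = 1 := by rw [← map_mul, mul_inv_cancel₀ ha, map_one]
  rw [h, zero_mul] at this; exact zero_ne_one this

lemma mc_sq (χ : MulChar F ℂ) : χ (-1) ^ 2 = 1 := by rw [sq, ← map_mul]; norm_num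

lemma mc_cube (χ : MulChar F ℂ) : χ (-1) ^ 3 = χ (-1) := by rw [pow_succ, mc_sq, one_mul]

lemma mc_pow4 (χ : MulChar F ℂ) : χ (-1) ^ 4 = 1 := by
  rw [show (4:ℕ) = 2*2 from rfl, pow_mul, mc_sq, one_pow]

lemma mc_neg_one_inv (χ : MulChar F ℂ) : (χ (-1))⁻¹ = χ (-1) := by
  rw [← mc_inv, inv_neg, inv_one]

def cterm (A A' B B' C : MulChar F ℂ) (u v w : F) : ℂ :=
  ((C * B⁻¹) (-1) * (C * A⁻¹) (-1)) *
    (A' u * (B' v * ((C * B⁻¹) ((1 - v)⁻¹) *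
      ((A⁻¹ * B⁻¹ * C) w * (C * A⁻¹) ((1 - w)⁻¹)))))

def Zarg (y u v w : F) : F := -1 * (u * ((1-u)⁻¹ * (v * ((1-v)⁻¹ * (w * ((1-w)⁻¹ * y))))))

lemma T_expand (A A' B B' C : MulChar F ℂ) (y : F) (χ : MulChar F ℂ) :
    binom (A' * χ) χ * binom (B' * χ) (C * B⁻¹ * χ) *
      binom (A⁻¹ * B⁻¹ * C * χ) (C * A⁻¹ * χ) * χ y
    = ∑ w : F, ∑ v : F, ∑ u : F,
        cterm A A' B B' C u v w * χ (Zarg y u v w) := by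
  simp only [binom, Jsum, Finset.mul_sum, Finset.sum_mul]
  refine Finset.sum_congr rfl fun w _ => ?_
  refine Finset.sum_congr rfl fun v _ => ?_
  refine Finset.sum_congr rfl fun u _ => ?_
  simp only [cterm, Zarg, MulChar.mul_apply, MulChar.inv_apply', map_mul, mc_inv, map_one,
    map_neg, MulChar.map_one, inv_inv, mc_neg_one_inv]
  ring_nf
  simp only [mc_sq, mc_cube, one_mul, mul_one]

lemma rhs_eq (A A' B B' C : MulChar F ℂ) (y : F) :
    H3F2 A' B' (A⁻¹ * B⁻¹ * C) (C * B⁻¹) (C * A⁻¹) y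
    = ∑ w : F, ∑ v : F, ∑ u : F,
        if Zarg y u v w = 1 then cterm A A' B B' C u v w else 0 := by
  have hq1 : ((Fintype.card F : ℂ) - 1) ≠ 0 := by
    have h2 : (1:ℕ) < Fintype.card F := Fintype.one_lt_card
    intro h
    have h1 : ((Fintype.card F : ℂ)) = 1 := sub_eq_zero.mp h
    rw [show (1:ℂ) = ((1:ℕ):ℂ) by norm_num] at h1
    exact absurd (Nat.cast_injective h1) (by omega)
  unfold H3F2
  rw [Finset.sum_congr rfl fun χ _ => T_expand A A' B B' C y χ]
  rw [Finset.sum_comm]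
  rw [Finset.mul_sum]
  refine Finset.sum_congr rfl fun w _ => ?_
  rw [Finset.sum_comm, Finset.mul_sum]
  refine Finset.sum_congr rfl fun v _ => ?_
  rw [Finset.sum_comm, Finset.mul_sum]
  refine Finset.sum_congr rfl fun u _ => ?_
  rw [← Finset.mul_sum, sum_mulChar]
  rcases eq_or_ne (Zarg y u v w) 1 with h | h
  · rw [if_pos h, if_pos h]; field_simp
  · rw [if_neg h, if_neg h]; ring

lemma Zarg_ne {y a b c : F} (h : Zarg y a b c = 1) :
    a ≠ 0 ∧ 1 - a ≠ 0 ∧ b ≠ 0 ∧ 1 - b ≠ 0 ∧ c ≠ 0 ∧ 1 - c ≠ 0 ∧ y ≠ 0 := by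
  unfold Zarg at h
  refine ⟨?_, ?_, ?_, ?_, ?_, ?_, ?_⟩ <;> intro h0 <;> rw [h0] at h <;> simp at h

theorem AF3_x_eq_one (A A' B B' C : MulChar F ℂ) (y : F) :
    AF3 A A' B B' C 1 y =
      B (-1) * C (-1) * H3F2 A' B' (A⁻¹ * B⁻¹ * C) (C * B⁻¹) (C * A⁻¹) y := by
  rw [rhs_eq, AF3]
  rcases eq_or_ne y 0 with rfl | hy
  · simp [Zarg, MulChar.map_zero]
  · rw [one_mul, show (1 : MulChar F ℂ) y = 1 from MulChar.one_apply (isUnit_iff_ne_zero.mpr hy),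
      one_mul]
    simp only [mul_one]
    simp only [← Finset.sum_product', Finset.univ_product_univ]
    rw [Finset.mul_sum, Finset.mul_sum]
    simp only [mul_ite, mul_zero]
    rw [← Finset.sum_filter]
    rw [← Finset.sum_filter_of_ne (p := fun p : F × F => p.1 ≠ 0 ∧ p.2 ≠ 0 ∧ 1 - p.1 ≠ 0 ∧
        1 - p.1 - p.2 ≠ 0 ∧ 1 - p.2 * y ≠ 0) (s := Finset.univ) ?_]
    swap
    · intro p _ hne
      refine ⟨?_, ?_, ?_, ?_, ?_⟩ <;> intro h0 <;> apply hne <;>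
        simp [h0, MulChar.map_zero]
    refine Finset.sum_nbij'
      (i := fun p => (-((1 - p.1) * p.1⁻¹), -(p.2 * (1 - p.1 - p.2)⁻¹), (1 - p.2 * y)⁻¹))
      (j := fun t => ((1 - t.1)⁻¹, (t.2.2 - 1) * (t.2.2 * y)⁻¹)) ?_ ?_ ?_ ?_ ?_
    · -- membership forward
      intro p hp
      simp only [Finset.mem_filter, Finset.mem_univ, true_and] at hp ⊢
      obtain ⟨h1, h2, h3, h4, h5⟩ := hp
      unfold Zarg
      field_simp
      ring_nf
      field_simp
      ring
    · -- membership backward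
      intro t ht
      simp only [Finset.mem_filter, Finset.mem_univ, true_and] at ht ⊢
      obtain ⟨w, v, u⟩ := t
      obtain ⟨hu, h1u, hv, h1v, hw, h1w, hy'⟩ := Zarg_ne ht
      rw [Zarg] at ht
      field_simp at ht
      dsimp only at hu h1u hv h1v hw h1w ⊢
      have hu1 : u - 1 ≠ 0 := fun h => h1u (by linear_combination -h)
      refine ⟨inv_ne_zero h1w, mul_ne_zero hu1 (inv_ne_zero (mul_ne_zero hu hy)), ?_, ?_, ?_⟩
      · intro h0
        field_simp at h0
        exact hw (by linear_combination -h0)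
      · intro h0
        field_simp at h0
        exact mul_ne_zero h1u h1w (by linear_combination v * h0 - ht)
      · intro h0
        field_simp at h0
        exact hy (by linear_combination y * h0)
    · -- left inverse
      intro p hp
      simp only [Finset.mem_filter, Finset.mem_univ, true_and] at hp
      obtain ⟨h1, h2, h3, h4, h5⟩ := hp
      refine Prod.ext ?_ ?_
      · show (1 - -((1 - p.1) * p.1⁻¹))⁻¹ = p.1
        field_simp
        ring
      · show ((1 - p.2 * y)⁻¹ - 1) * ((1 - p.2 * y)⁻¹ * y)⁻¹ = p.2
        field_simp
        ring
    · -- right inverse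
      intro t ht
      simp only [Finset.mem_filter, Finset.mem_univ, true_and] at ht
      obtain ⟨w, v, u⟩ := t
      obtain ⟨hu, h1u, hv, h1v, hw, h1w, hy'⟩ := Zarg_ne ht
      rw [Zarg] at ht
      field_simp at ht
      dsimp only at hu h1u hv h1v hw h1w ⊢
      have hu1 : u - 1 ≠ 0 := fun h => h1u (by linear_combination -h)
      have hd : 1 - (1 - w)⁻¹ - (u - 1) * (u * y)⁻¹ ≠ 0 := by
        intro h0
        field_simp at h0
        exact mul_ne_zero h1u h1w (by linear_combination v * h0 - ht)
      refine Prod.ext ?_ (Prod.ext ?_ ?_)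
      · show -((1 - (1 - w)⁻¹) * ((1 - w)⁻¹)⁻¹) = w
        field_simp
        ring
      · show -((u - 1) * (u * y)⁻¹ * (1 - (1 - w)⁻¹ - (u - 1) * (u * y)⁻¹)⁻¹) = v
        field_simp
        have hD2 : -(w * (u * y)) - (1 - w) * (u - 1) ≠ 0 :=
          fun h0 => mul_ne_zero h1u h1w (by linear_combination v * h0 - ht)
        rw [← neg_div, div_eq_iff (show u * y * (1 - w - 1) - (u - 1) * (1 - w) ≠ 0 from
          fun h0 => hD2 (by linear_combination h0))]
        linear_combination (-1 : F) * ht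
      · show (1 - (u - 1) * (u * y)⁻¹ * y)⁻¹ = u
        field_simp
        ring
    · -- term equality
      intro p hp
      simp only [Finset.mem_filter, Finset.mem_univ, true_and] at hp
      obtain ⟨h1, h2, h3, h4, h5⟩ := hp
      show B (-1) * B' (-1) * (B p.1 * B' p.2 * (C * B⁻¹ * B'⁻¹) (1 - p.1 - p.2) *
          A⁻¹ (1 - p.1) * A'⁻¹ (1 - p.2 * y)) =
        B (-1) * C (-1) * cterm A A' B B' C (1 - p.2 * y)⁻¹
          (-(p.2 * (1 - p.1 - p.2)⁻¹)) (-((1 - p.1) * p.1⁻¹))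
      obtain ⟨u, v⟩ := p
      dsimp only at h1 h2 h3 h4 h5 ⊢
      rw [cterm]
      rw [show (1 - -(v * (1 - u - v)⁻¹))⁻¹ = (1 - u - v) * (1 - u)⁻¹ by
        rw [show 1 - -(v * (1 - u - v)⁻¹) = (1 - u) * (1 - u - v)⁻¹ by field_simp; ring]
        rw [mul_inv, inv_inv]; ring]
      rw [show (1 - -((1 - u) * u⁻¹))⁻¹ = u by
        rw [show 1 - -((1 - u) * u⁻¹) = u⁻¹ by field_simp; ring]
        rw [inv_inv]]
      rw [show -(v * (1 - u - v)⁻¹) = -1 * (v * (1 - u - v)⁻¹) by ring]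
      rw [show -((1 - u) * u⁻¹) = -1 * ((1 - u) * u⁻¹) by ring]
      simp only [MulChar.mul_apply, MulChar.inv_apply_eq_inv', map_mul, mc_inv,
        mc_neg_one_inv, inv_inv]
      have n1 := mc_ne_zero B h1
      have n2 := mc_ne_zero B' h2
      have n3 := mc_ne_zero A h3
      have n4 := mc_ne_zero C h3
      have n5 := mc_ne_zero B h3
      have n6 := mc_ne_zero B' h4
      have n7 := mc_ne_zero B h4
      have n8 := mc_ne_zero C h4
      have n9 := mc_ne_zero A' h5
      have n10 := mc_ne_zero A h1
      have n11 := mc_ne_zero C h1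
      have n12 : A (-1) ≠ 0 := mc_ne_zero A (by norm_num)
      have n13 : B (-1) ≠ 0 := mc_ne_zero B (by norm_num)
      have n14 : C (-1) ≠ 0 := mc_ne_zero C (by norm_num)
      field_simp
      ring_nf
      simp only [mc_sq, mc_cube, mc_pow4, one_mul, mul_one]
end
end

section
/- Special 2F1 evaluation (Greene): for multiplicative characters A, B of F_q and x ∈ F_q, 2F1(A, B; A | x) = (B choose A)·ε(x)·B̄(1-x) - Ā(-x) + (q-1)·A(-1)·δ(1-x)·δ(B), where δ(1-x) = 1 iff x = 1 and δ(B) = 1 iff B is trivial. -/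
open scoped BigOperators Classical

noncomputable section

variable {F : Type*} [Field F] [Fintype F]

/-! ### Auxiliary lemmas -/

lemma sum_triv' : ∑ v : F, (1 : MulChar F ℂ) v = (Fintype.card F : ℂ) - 1 := by
  have h : ∀ v : F, (1 : MulChar F ℂ) v = (1:ℂ) - if v = 0 then 1 else 0 := by
    intro v
    by_cases h : v = 0
    · simp [h, MulChar.map_zero]
    · simp [h, MulChar.one_apply (isUnit_iff_ne_zero.mpr h)]
  simp only [h]
  rw [Finset.sum_sub_distrib]
  simp [Finset.sum_ite_eq']

lemma key' (A B : MulChar F ℂ) {x u : F} (hx0 : x ≠ 0) (hx1 : x ≠ 1) (hu : u ≠ 1 - x) :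
    B (u/(u+x-1)) * (B⁻¹*A) (1 - u/(u+x-1)) * A⁻¹ (1 - x*(u/(u+x-1))) =
      B (-1) * B⁻¹ (1-x) * (B u * A⁻¹ (1-u)) := by
  have hd : u + x - 1 ≠ 0 := fun h => hu (by linear_combination h)
  have hx1' : x - 1 ≠ 0 := sub_ne_zero.mpr hx1
  have h1x : (1:F) - x ≠ 0 := fun h => hx1 (by linear_combination -h)
  by_cases hu1 : u = 1
  · subst hu1
    have h2 : (1:F) - x*(1/(1+x-1)) = 0 := by
      have : (1:F)+x-1 = x := by ring
      rw [this]; field_simp; ring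
    rw [h2]
    simp [MulChar.map_zero]
  have hu1' : u - 1 ≠ 0 := sub_ne_zero.mpr hu1
  have h1 : (1 : F) - u/(u+x-1) = (x-1)/(u+x-1) := by field_simp; ring
  have h2 : (1 : F) - x*(u/(u+x-1)) = ((1-x)*(u-1))/(u+x-1) := by field_simp; ring
  rw [h1, h2]
  simp only [MulChar.mul_apply, MulChar.inv_apply']
  have cB : B (u/(u+x-1)) * B (((x-1)/(u+x-1))⁻¹) = B (-1) * B ((1-x)⁻¹) * B u := by
    rw [← map_mul, ← map_mul, ← map_mul]
    congr 1
    field_simp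
    ring
  have h1u : (1:F) - u ≠ 0 := fun h => hu1 (by linear_combination -h)
  have cA : A ((x-1)/(u+x-1)) * A ((((1-x)*(u-1))/(u+x-1))⁻¹) = A ((1-u)⁻¹) := by
    rw [← map_mul]
    congr 1
    field_simp
    ring
  calc B (u/(u+x-1)) * (B (((x-1)/(u+x-1))⁻¹) * A ((x-1)/(u+x-1))) * A ((((1-x)*(u-1))/(u+x-1))⁻¹)
      = (B (u/(u+x-1)) * B (((x-1)/(u+x-1))⁻¹)) * (A ((x-1)/(u+x-1)) * A ((((1-x)*(u-1))/(u+x-1))⁻¹)) := by ring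
    _ = (B (-1) * B ((1-x)⁻¹) * B u) * A ((1-u)⁻¹) := by rw [cB, cA]
    _ = B (-1) * B ((1-x)⁻¹) * (B u * A ((1-u)⁻¹)) := by ring

lemma reindex' {x : F} (hx1 : x ≠ 1) (f : F → ℂ) :
    ∑ y : F, f y = ∑ u : F, f (if u = 1 - x then 1 else u/(u+x-1)) := by
  have hx1' : x - 1 ≠ 0 := sub_ne_zero.mpr hx1
  let e : F ≃ F :=
  { toFun := fun u => if u = 1 - x then 1 else u/(u+x-1)
    invFun := fun y => if y = 1 then 1 - x else y*(x-1)/(1-y)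
    left_inv := by
      intro u
      by_cases hu : u = 1 - x
      · simp [hu]
      · have hd : u + x - 1 ≠ 0 := fun h => hu (by linear_combination h)
        have hne : u/(u+x-1) ≠ 1 := by
          intro h
          rw [div_eq_iff hd] at h
          exact hx1 (by linear_combination -h)
        simp only [if_neg hu, if_neg hne]
        rw [show (1:F) - u/(u+x-1) = (x-1)/(u+x-1) from by field_simp; ring]
        field_simp
    right_inv := by
      intro y
      by_cases hy : y = 1
      · simp [hy]
      · have h1y : (1:F) - y ≠ 0 := fun h => hy (by linear_combination -h)
        have hne : y*(x-1)/(1-y) ≠ 1 - x := by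
          intro h
          rw [div_eq_iff h1y] at h
          have : (x-1) * 1 = 0 := by linear_combination h
          simp at this
          exact hx1 (by linear_combination this)
        simp only [if_neg hy, if_neg hne]
        rw [show y*(x-1)/(1-y) + x - 1 = (x-1)/(1-y) from by field_simp; ring]
        field_simp }
  exact (Equiv.sum_comp e f).symm

lemma Jsum_self (B : MulChar F ℂ) :
    Jsum B B⁻¹ = (if B = 1 then (Fintype.card F : ℂ) - 1 else 0) - B (-1) := by
  let e : F ≃ F :=
  { toFun := fun u => if u = 1 then -1 else u/(1-u)
    invFun := fun v => if v = -1 then 1 else v/(1+v)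
    left_inv := by
      intro u
      by_cases hu : u = 1
      · simp [hu]
      · have h1u : (1:F) - u ≠ 0 := fun h => hu (by linear_combination -h)
        have hne : u/(1-u) ≠ -1 := by
          intro h
          rw [div_eq_iff h1u] at h
          exact one_ne_zero (α := F) (by linear_combination h)
        simp only [if_neg hu, if_neg hne]
        rw [show (1:F) + u/(1-u) = 1/(1-u) from by field_simp; ring]
        field_simp
    right_inv := by
      intro v
      by_cases hv : v = -1
      · simp [hv]
      · have h1v : (1:F) + v ≠ 0 := fun h => hv (by linear_combination h)
        have hne : v/(1+v) ≠ 1 := by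
          intro h
          rw [div_eq_iff h1v] at h
          exact one_ne_zero (α := F) (by linear_combination -h)
        simp only [if_neg hv, if_neg hne]
        rw [show (1:F) - v/(1+v) = 1/(1+v) from by field_simp; ring]
        field_simp }
  have hpt : ∀ u : F, B u * B⁻¹ (1 - u) =
      B (if u = 1 then -1 else u/(1-u)) - (if u = 1 then B (-1) else 0) := by
    intro u
    by_cases hu : u = 1
    · simp [hu, MulChar.map_zero]
    · have h1u : (1:F) - u ≠ 0 := fun h => hu (by linear_combination -h)
      rw [if_neg hu, if_neg hu, MulChar.inv_apply', ← map_mul, sub_zero, div_eq_mul_inv]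
  calc Jsum B B⁻¹ = ∑ u : F, (B (if u = 1 then -1 else u/(1-u)) - (if u = 1 then B (-1) else 0)) := by
        unfold Jsum; exact Finset.sum_congr rfl fun u _ => hpt u
    _ = (∑ u : F, B (e u)) - ∑ u : F, (if u = 1 then B (-1) else 0) := by
        rw [Finset.sum_sub_distrib]
        congr 1
    _ = (∑ v : F, B v) - B (-1) := by rw [Equiv.sum_comp e (B ·)]; simp [Finset.sum_ite_eq']
    _ = _ := by
        congr 1
        by_cases hB : B = 1
        · rw [if_pos hB, hB]; exact sum_triv'
        · rw [if_neg hB]; exact MulChar.sum_eq_zero_of_ne_one hB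

theorem H2F1_same (A B : MulChar F ℂ) (x : F) :
    H2F1 A B A x =
      binom B A * (1 : MulChar F ℂ) x * B⁻¹ (1 - x) - A⁻¹ (-x) +
      ((Fintype.card F : ℂ) - 1) * A (-1) * (if 1 - x = 0 then 1 else 0) *
        (if B = 1 then 1 else 0) := by
  by_cases hx0 : x = 0
  · subst hx0
    simp [H2F1, MulChar.map_zero]
  by_cases hx1 : x = 1
  · subst hx1
    have hpt : ∀ y : F, B y * (B⁻¹*A) (1-y) * A⁻¹ (1 - 1*y) = B y * B⁻¹ (1-y) := by
      intro y
      rw [one_mul]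
      by_cases h : (1:F) - y = 0
      · rw [h]; simp [MulChar.map_zero]
      · rw [MulChar.mul_apply, MulChar.inv_apply' A, MulChar.inv_apply' B]
        have hA : A (1-y) * A ((1-y)⁻¹) = 1 := by
          rw [← map_mul, mul_inv_cancel₀ h, map_one]
        linear_combination (B y * B ((1-y)⁻¹)) * hA
    have hBB : B (-1) * B (-1) = 1 := by
      rw [← map_mul]; norm_num
    rw [H2F1]
    rw [Finset.sum_congr rfl fun y _ => hpt y]
    rw [show (∑ y : F, B y * B⁻¹ (1-y)) = Jsum B B⁻¹ from rfl, Jsum_self]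
    rw [MulChar.one_apply (isUnit_one (M := F)), MulChar.mul_apply]
    rw [show (1:F) - 1 = 0 from by ring, MulChar.map_zero, if_pos rfl]
    rw [show A⁻¹ (-1 : F) = A (-1) from by
      rw [MulChar.inv_apply', inv_neg_one]]
    by_cases hB : B = 1
    · rw [if_pos hB, if_pos hB]
      rw [show B (-1 : F) = 1 from by
        rw [hB]; exact MulChar.one_apply (by simp)]
      ring
    · rw [if_neg hB, if_neg hB]
      linear_combination -A (-1) * hBB
  -- main case : x ≠ 0, x ≠ 1
  have hxu : IsUnit x := isUnit_iff_ne_zero.mpr hx0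
  have h1x : (1:F) - x ≠ 0 := fun h => hx1 (by linear_combination -h)
  have hBB : B (-1) * B (-1) = 1 := by rw [← map_mul]; norm_num
  have hBinv : B⁻¹ (1-x) * B (1-x) = 1 := by
    rw [MulChar.inv_apply', ← map_mul, inv_mul_cancel₀ h1x, map_one]
  have hAneg : A⁻¹ (-x) = A (-1) * A⁻¹ x := by
    rw [MulChar.inv_apply', MulChar.inv_apply', ← map_mul]
    congr 1
    rw [inv_neg]
    ring
  have hpt : ∀ u : F,
      (fun y => B y * (B⁻¹*A) (1-y) * A⁻¹ (1 - x*y)) (if u = 1-x then 1 else u/(u+x-1)) =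
      B (-1) * B⁻¹ (1-x) * (B u * A⁻¹ (1-u)) -
        (if u = 1-x then B (-1) * B⁻¹ (1-x) * (B (1-x) * A⁻¹ x) else 0) := by
    intro u
    by_cases hu : u = 1-x
    · rw [if_pos hu, if_pos hu, hu]
      simp only
      rw [show (1:F) - (1-x) = x from by ring]
      rw [show (1:F) - 1 = 0 from by ring, MulChar.map_zero]
      ring
    · rw [if_neg hu, if_neg hu, sub_zero]
      exact key' A B hx0 hx1 hu
  have hsum : ∑ u : F, (B (-1) * B⁻¹ (1-x) * (B u * A⁻¹ (1-u)) -
        (if u = 1-x then B (-1) * B⁻¹ (1-x) * (B (1-x) * A⁻¹ x) else 0))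
      = B (-1) * B⁻¹ (1-x) * Jsum B A⁻¹ - B (-1) * B⁻¹ (1-x) * (B (1-x) * A⁻¹ x) := by
    rw [Finset.sum_sub_distrib, ← Finset.mul_sum]
    rw [Finset.sum_ite_eq' Finset.univ (1-x) fun _ => B (-1) * B⁻¹ (1-x) * (B (1-x) * A⁻¹ x)]
    simp [Jsum]
  rw [H2F1, reindex' hx1 (fun y => B y * (B⁻¹*A) (1-y) * A⁻¹ (1 - x*y))]
  rw [Finset.sum_congr rfl fun u _ => hpt u, hsum]
  rw [binom, MulChar.one_apply hxu, MulChar.mul_apply, if_neg h1x, hAneg]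
  linear_combination (A (-1) * B⁻¹ (1-x) * Jsum B A⁻¹ -
      A (-1) * A⁻¹ x * B⁻¹ (1-x) * B (1-x)) * hBB - A (-1) * A⁻¹ x * hBinv

end
end
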